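/- arXiv:2504.13109 — 3 statements merged into one kernel-verified Lean document; each statement's English description precedes it below -/
import Mathlib

section
/- Under the Uni-Inv inversion step with second-order corrector velocity v̄ = v Ẑ_{i-1} t_{i-1}, if the previous iterate is exact, i.e. Ẑ_{i-1} = Z t_{i-1}, then the one-step (local) inversion error satisfies ‖Z t_i − Ẑ_i‖ ≤ X₁ · (C·X₁ + X₂) · Δt³. (Proposition 1 of the paper: the local error of Uni-Inv inversion is O(Δt³).) -/
/-!
Since the previous iterate is exact, the Euler relation makes both the corrected point `Z̄ᵢ` and the
inverted iterate `Ẑᵢ` differ from `Z tᵢ` by `Δt` times a velocity difference. For `Z̄ᵢ` this is the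
difference of `v` along the trajectory between `tᵢ₋₁` and `tᵢ`, of size `(C X₁ + X₂) Δt`, so
`‖Z tᵢ - Z̄ᵢ‖ = O(Δt²)`; for `Ẑᵢ` it is `v (Z tᵢ) tᵢ - v Z̄ᵢ tᵢ`, of size `X₁ ‖Z tᵢ - Z̄ᵢ‖`, which gains
one more factor of `Δt`.
-/

open Set

lemma norm_sub_add_smul_of_eq_add_smul {E : Type*} [SeminormedAddCommGroup E] [NormedSpace ℝ E]
    {z z₀ w w' : E} {h : ℝ} (hz : z = z₀ + h • w) :
    ‖z - (z₀ + h • w')‖ = |h| * ‖w - w'‖ := by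
  rw [hz, add_sub_add_left_eq_sub, ← smul_sub, norm_smul, Real.norm_eq_abs]

lemma norm_sub_le_along_of_lipschitz {E F : Type*} [SeminormedAddCommGroup E]
    [SeminormedAddCommGroup F] {v : E → ℝ → F} {Z : ℝ → E} {S : Set ℝ} {X₁ X₂ C : ℝ}
    (hX₁ : 0 ≤ X₁)
    (hLipx : ∀ t ∈ S, ∀ x y : E, ‖v x t - v y t‖ ≤ X₁ * ‖x - y‖)
    (hLipt : ∀ x : E, ∀ s ∈ S, ∀ t ∈ S, ‖v x s - v x t‖ ≤ X₂ * |s - t|)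
    (hZ : ∀ p ∈ S, ∀ q ∈ S, ‖Z p - Z q‖ ≤ C * |p - q|) {s t : ℝ} (hs : s ∈ S) (ht : t ∈ S) :
    ‖v (Z s) s - v (Z t) t‖ ≤ (C * X₁ + X₂) * |s - t| :=
  calc ‖v (Z s) s - v (Z t) t‖ ≤ ‖v (Z s) s - v (Z t) s‖ + ‖v (Z t) s - v (Z t) t‖ :=
        norm_sub_le_norm_sub_add_norm_sub _ _ _
    _ ≤ X₁ * (C * |s - t|) + X₂ * |s - t| := by
        gcongr
        · exact (hLipx s hs _ _).trans (by gcongr; exact hZ s hs t ht)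
        · exact hLipt _ s hs t ht
    _ = (C * X₁ + X₂) * |s - t| := by ring

theorem uniInv_local_error_general
    {E : Type*} [NormedAddCommGroup E] [NormedSpace ℝ E]
    (v : E → ℝ → E) (X₁ X₂ C : ℝ)
    (hX₁ : 0 ≤ X₁)
    (hLipx : ∀ t ∈ Set.Icc (0:ℝ) 1, ∀ x y : E, ‖v x t - v y t‖ ≤ X₁ * ‖x - y‖)
    (hLipt : ∀ x : E, ∀ s ∈ Set.Icc (0:ℝ) 1, ∀ t ∈ Set.Icc (0:ℝ) 1,
      ‖v x s - v x t‖ ≤ X₂ * |s - t|)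
    (Z : ℝ → E)
    (hZ : ∀ p ∈ Set.Icc (0:ℝ) 1, ∀ q ∈ Set.Icc (0:ℝ) 1, ‖Z p - Z q‖ ≤ C * |p - q|)
    (tprev ti Δt : ℝ)
    (h0 : 0 ≤ tprev) (hlt : tprev < ti) (h1 : ti ≤ 1)
    (hΔt : Δt = ti - tprev)
    (hEuler : Z ti = Z tprev + Δt • v (Z ti) ti)
    (Zhatprev vbar Zbar vhat Zhat : E)
    (hprev : Zhatprev = Z tprev)
    (hvbar : vbar = v Zhatprev tprev)
    (hZbar : Zbar = Zhatprev + Δt • vbar)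
    (hvhat : vhat = v Zbar ti)
    (hZhat : Zhat = Zhatprev + Δt • vhat) :
    ‖Z ti - Zhat‖ ≤ X₁ * (C * X₁ + X₂) * Δt ^ 3 := by
  subst hprev hvbar hvhat hZhat
  have hti : ti ∈ Icc (0:ℝ) 1 := ⟨h0.trans hlt.le, h1⟩
  have htprev : tprev ∈ Icc (0:ℝ) 1 := ⟨h0, hlt.le.trans h1⟩
  have hΔ : |Δt| = Δt := abs_of_nonneg (by linarith)
  have hZbar_err : ‖Z ti - Zbar‖ ≤ Δt * ((C * X₁ + X₂) * Δt) := by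
    rw [hZbar, norm_sub_add_smul_of_eq_add_smul hEuler, hΔ]
    gcongr
    · linarith
    · have := norm_sub_le_along_of_lipschitz hX₁ hLipx hLipt hZ hti htprev
      rwa [← hΔt, hΔ] at this
  calc ‖Z ti - (Z tprev + Δt • v Zbar ti)‖ = Δt * ‖v (Z ti) ti - v Zbar ti‖ := by
        rw [norm_sub_add_smul_of_eq_add_smul hEuler, hΔ]
    _ ≤ Δt * (X₁ * (Δt * ((C * X₁ + X₂) * Δt))) := by
        gcongr
        · linarith
        · exact (hLipx ti hti _ _).trans (by gcongr)
    _ = X₁ * (C * X₁ + X₂) * Δt ^ 3 := by ring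

/-- **Proposition 1 (local error of Uni-Inv).**
Under the Uni-Inv inversion step with second-order corrector velocity
`v̄ = v Ẑprev tprev`, if the previous iterate is exact (`Ẑprev = Z tprev`),
then the one-step (local) inversion error satisfies
`‖Z ti − Ẑ‖ ≤ X₁ · (C·X₁ + X₂) · Δt³`. -/
theorem uniInv_local_error
    {E : Type*} [NormedAddCommGroup E] [NormedSpace ℝ E]
    (v : E → ℝ → E) (X₁ X₂ C : ℝ)
    (hX₁ : 0 ≤ X₁) (hX₂ : 0 ≤ X₂) (hC : 0 ≤ C)
    (hLipx : ∀ t ∈ Set.Icc (0:ℝ) 1, ∀ x y : E, ‖v x t - v y t‖ ≤ X₁ * ‖x - y‖)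
    (hLipt : ∀ x : E, ∀ s ∈ Set.Icc (0:ℝ) 1, ∀ t ∈ Set.Icc (0:ℝ) 1,
      ‖v x s - v x t‖ ≤ X₂ * |s - t|)
    (Z : ℝ → E)
    (hZ : ∀ p ∈ Set.Icc (0:ℝ) 1, ∀ q ∈ Set.Icc (0:ℝ) 1, ‖Z p - Z q‖ ≤ C * |p - q|)
    (tprev ti Δt : ℝ)
    (h0 : 0 ≤ tprev) (hlt : tprev < ti) (h1 : ti ≤ 1)
    (hΔt : Δt = ti - tprev)
    (hEuler : Z ti = Z tprev + Δt • v (Z ti) ti)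
    (Zhatprev vbar Zbar vhat Zhat : E)
    (hprev : Zhatprev = Z tprev)
    (hvbar : vbar = v Zhatprev tprev)
    (hZbar : Zbar = Zhatprev + Δt • vbar)
    (hvhat : vhat = v Zbar ti)
    (hZhat : Zhat = Zhatprev + Δt • vhat) :
    ‖Z ti - Zhat‖ ≤ X₁ * (C * X₁ + X₂) * Δt ^ 3 :=
  uniInv_local_error_general v X₁ X₂ C hX₁ hLipx hLipt Z hZ tprev ti Δt h0 hlt h1 hΔt hEuler
    Zhatprev vbar Zbar vhat Zhat hprev hvbar hZbar hvhat hZhat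
end

section
/- Under the Uni-Inv inversion step with second-order corrector velocity v̄ = v Ẑ_{i-1} t_{i-1}, the one-step inversion error with accumulated previous error E_A = ‖Z t_{i-1} − Ẑ_{i-1}‖ satisfies ‖Z t_i − Ẑ_i‖ ≤ (1 + X₁·Δt + X₁²·Δt²) · E_A + X₁·(C·X₁ + X₂)·Δt³. -/
/-!
Both the Euler relation for the true trajectory and the two inversion updates have the form
`a = a₀ + Δt • u`, so each error is the previous error plus `Δt` times a velocity difference.
The corrector's velocity error is `X₁` times the predictor's position error, and the predictor's
velocity error is controlled by the space and time Lipschitz constants together with the drift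
`‖Z tᵢ - Z tᵢ₋₁‖ ≤ C Δt` of the trajectory; composing the two bounds gives the estimate.
-/

open Set

lemma norm_sub_le_of_eq_add_smul {E : Type*} [NormedAddCommGroup E] [NormedSpace ℝ E]
    {a a₀ b b₀ u w : E} {h : ℝ}
    (ha : a = a₀ + h • u) (hb : b = b₀ + h • w) (hh : 0 ≤ h) :
    ‖a - b‖ ≤ ‖a₀ - b₀‖ + h * ‖u - w‖ := by
  subst ha hb
  calc ‖a₀ + h • u - (b₀ + h • w)‖ = ‖(a₀ - b₀) + h • (u - w)‖ := by
        rw [smul_sub]; abel_nf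
    _ ≤ ‖a₀ - b₀‖ + ‖h • (u - w)‖ := norm_add_le _ _
    _ = ‖a₀ - b₀‖ + h * ‖u - w‖ := by rw [norm_smul, Real.norm_of_nonneg hh]

lemma norm_sub_le_of_lipschitz_space_time {E : Type*} [SeminormedAddGroup E]
    (v : E → ℝ → E) {I : Set ℝ} {X₁ X₂ : ℝ}
    (hLipx : ∀ t ∈ I, ∀ x y : E, ‖v x t - v y t‖ ≤ X₁ * ‖x - y‖)
    (hLipt : ∀ x : E, ∀ s ∈ I, ∀ t ∈ I, ‖v x s - v x t‖ ≤ X₂ * |s - t|)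
    {s t : ℝ} (hs : s ∈ I) (ht : t ∈ I) (x y : E) :
    ‖v x s - v y t‖ ≤ X₁ * ‖x - y‖ + X₂ * |s - t| :=
  (norm_sub_le_norm_sub_add_norm_sub _ (v y s) _).trans
    (add_le_add (hLipx s hs x y) (hLipt y s hs t ht))

theorem uniInv_one_step_error_with_accumulation_general
    {E : Type*} [NormedAddCommGroup E] [NormedSpace ℝ E]
    (v : E → ℝ → E) (X₁ X₂ C : ℝ)
    (hX₁ : 0 ≤ X₁)
    (hLipx : ∀ t ∈ Set.Icc (0:ℝ) 1, ∀ x y : E, ‖v x t - v y t‖ ≤ X₁ * ‖x - y‖)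
    (hLipt : ∀ x : E, ∀ s ∈ Set.Icc (0:ℝ) 1, ∀ t ∈ Set.Icc (0:ℝ) 1,
      ‖v x s - v x t‖ ≤ X₂ * |s - t|)
    (Z : ℝ → E)
    (hZ : ∀ p ∈ Set.Icc (0:ℝ) 1, ∀ q ∈ Set.Icc (0:ℝ) 1, ‖Z p - Z q‖ ≤ C * |p - q|)
    (tprev ti Δt : ℝ)
    (h0 : 0 ≤ tprev) (hlt : tprev < ti) (h1 : ti ≤ 1)
    (hΔt : Δt = ti - tprev)
    (hEuler : Z ti = Z tprev + Δt • v (Z ti) ti)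
    (Zhatprev vbar Zbar vhat Zhat : E)
    (hvbar : vbar = v Zhatprev tprev)
    (hZbar : Zbar = Zhatprev + Δt • vbar)
    (hvhat : vhat = v Zbar ti)
    (hZhat : Zhat = Zhatprev + Δt • vhat) :
    ‖Z ti - Zhat‖ ≤
      (1 + X₁ * Δt + X₁ ^ 2 * Δt ^ 2) * ‖Z tprev - Zhatprev‖
        + X₁ * (C * X₁ + X₂) * Δt ^ 3 := by
  have hΔt_nonneg : 0 ≤ Δt := by linarith
  have htprev : tprev ∈ Icc (0:ℝ) 1 := ⟨h0, by linarith⟩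
  have hti : ti ∈ Icc (0:ℝ) 1 := ⟨by linarith, h1⟩
  have hgap : |ti - tprev| = Δt := by rw [hΔt, abs_of_pos (sub_pos.2 hlt)]
  set EA := ‖Z tprev - Zhatprev‖
  have hdrift : ‖Z ti - Zhatprev‖ ≤ C * Δt + EA :=
    (norm_sub_le_norm_sub_add_norm_sub _ (Z tprev) _).trans
      (add_le_add_left (hgap ▸ hZ ti hti tprev htprev) _)
  have hpredictor : ‖Z ti - Zbar‖ ≤ (1 + X₁ * Δt) * EA + (C * X₁ + X₂) * Δt ^ 2 := by
    calc ‖Z ti - Zbar‖ ≤ EA + Δt * ‖v (Z ti) ti - vbar‖ :=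
          norm_sub_le_of_eq_add_smul hEuler hZbar hΔt_nonneg
      _ ≤ EA + Δt * (X₁ * (C * Δt + EA) + X₂ * Δt) := by
          rw [hvbar]
          gcongr
          exact (norm_sub_le_of_lipschitz_space_time v hLipx hLipt hti htprev _ _).trans
            (by rw [hgap]; gcongr)
      _ = (1 + X₁ * Δt) * EA + (C * X₁ + X₂) * Δt ^ 2 := by ring
  calc ‖Z ti - Zhat‖ ≤ EA + Δt * ‖v (Z ti) ti - vhat‖ :=
        norm_sub_le_of_eq_add_smul hEuler hZhat hΔt_nonneg
    _ ≤ EA + Δt * (X₁ * ((1 + X₁ * Δt) * EA + (C * X₁ + X₂) * Δt ^ 2)) := by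
        rw [hvhat]
        gcongr
        exact (hLipx ti hti _ _).trans (by gcongr)
    _ = (1 + X₁ * Δt + X₁ ^ 2 * Δt ^ 2) * EA + X₁ * (C * X₁ + X₂) * Δt ^ 3 := by ring

/-- Under the Uni-Inv inversion step with second-order corrector velocity
`v̄ = v Ẑprev tprev`, the one-step inversion error with accumulated previous error
`E_A = ‖Z tprev − Ẑprev‖` satisfies
`‖Z ti − Ẑ‖ ≤ (1 + X₁·Δt + X₁²·Δt²) · E_A + X₁·(C·X₁ + X₂)·Δt³`. -/
theorem uniInv_one_step_error_with_accumulation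
    {E : Type*} [NormedAddCommGroup E] [NormedSpace ℝ E]
    (v : E → ℝ → E) (X₁ X₂ C : ℝ)
    (hX₁ : 0 ≤ X₁) (hX₂ : 0 ≤ X₂) (hC : 0 ≤ C)
    (hLipx : ∀ t ∈ Set.Icc (0:ℝ) 1, ∀ x y : E, ‖v x t - v y t‖ ≤ X₁ * ‖x - y‖)
    (hLipt : ∀ x : E, ∀ s ∈ Set.Icc (0:ℝ) 1, ∀ t ∈ Set.Icc (0:ℝ) 1,
      ‖v x s - v x t‖ ≤ X₂ * |s - t|)
    (Z : ℝ → E)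
    (hZ : ∀ p ∈ Set.Icc (0:ℝ) 1, ∀ q ∈ Set.Icc (0:ℝ) 1, ‖Z p - Z q‖ ≤ C * |p - q|)
    (tprev ti Δt : ℝ)
    (h0 : 0 ≤ tprev) (hlt : tprev < ti) (h1 : ti ≤ 1)
    (hΔt : Δt = ti - tprev)
    (hEuler : Z ti = Z tprev + Δt • v (Z ti) ti)
    (Zhatprev vbar Zbar vhat Zhat : E)
    (hvbar : vbar = v Zhatprev tprev)
    (hZbar : Zbar = Zhatprev + Δt • vbar)
    (hvhat : vhat = v Zbar ti)
    (hZhat : Zhat = Zhatprev + Δt • vhat) :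
    ‖Z ti - Zhat‖ ≤
      (1 + X₁ * Δt + X₁ ^ 2 * Δt ^ 2) * ‖Z tprev - Zhatprev‖
        + X₁ * (C * X₁ + X₂) * Δt ^ 3 :=
  uniInv_one_step_error_with_accumulation_general v X₁ X₂ C hX₁ hLipx hLipt Z hZ tprev ti Δt h0 hlt
    h1 hΔt hEuler Zhatprev vbar Zbar vhat Zhat hvbar hZbar hvhat hZhat
end

section
/- Let N ≥ 1, h = 1/N, and grid points t_j = j·h for j = 0,…,N. Suppose Z : [0,1] → E satisfies the Euler relation Z t_j = Z t_{j-1} + h · v (Z t_j) t_j at every step, and define the Uni-Inv iterates by Ẑ_0 = Z 0 and, for j = 1,…,N, Ẑ_j = Ẑ_{j-1} + h · v (Ẑ_{j-1} + h · v Ẑ_{j-1} t_{j-1}) t_j (i.e., each step uses the second-order corrector velocity v̄_j = v Ẑ_{j-1} t_{j-1}). If X₁ > 0, then the global inversion error satisfies ‖Z 1 − Ẑ_N‖ ≤ (C·X₁ + X₂) · (exp(X₁ + X₁²) − 1) · h². (The paper's global error claim: the global error of Uni-Inv is O(max_i Δt_i²).) -/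
/-!
Along the exact trajectory the velocity changes by at most `(C·X₁ + X₂)·h` per step, and the
Euler relation makes `Z` an implicit-Euler trajectory. Comparing one Uni-Inv step with it, the
predictor `Ẑ + h·v Ẑ` is within `(1 + hX₁)·e + (C·X₁ + X₂)·h²` of `Z(t_{j+1})`, so the corrector
gives the recursion `e_{j+1} ≤ (1 + a)·e_j + (C·X₁ + X₂)·h²·a` with `a = hX₁ + h²X₁²`. Since
`e_0 = 0`, this yields `e_N ≤ (C·X₁ + X₂)·h²·((1 + a)^N − 1)`, and `(1 + a)^N ≤ exp (N·a)`
with `N·a = X₁ + hX₁² ≤ X₁ + X₁²`.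
-/

open Set Real

theorem discrete_gronwall_one_add_pow {u : ℕ → ℝ} {a B : ℝ} {n : ℕ} (ha : 0 ≤ 1 + a)
    (hu₀ : u 0 ≤ 0) (hu : ∀ k < n, u (k + 1) ≤ (1 + a) * u k + B * a) :
    u n ≤ B * ((1 + a) ^ n - 1) := by
  induction n with
  | zero => simpa using hu₀
  | succ n ih =>
    calc u (n + 1) ≤ (1 + a) * u n + B * a := hu n n.lt_succ_self
      _ ≤ (1 + a) * (B * ((1 + a) ^ n - 1)) + B * a := by
          gcongr
          exact ih fun k hk => hu k (by omega)
      _ = B * ((1 + a) ^ (n + 1) - 1) := by ring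

theorem one_add_pow_le_exp_mul {a : ℝ} (ha : 0 ≤ 1 + a) (n : ℕ) :
    (1 + a) ^ n ≤ exp (n * a) := by
  rw [exp_nat_mul]
  exact pow_le_pow_left₀ ha (by linarith [add_one_le_exp a]) n

theorem norm_velocity_sub_le {E : Type*} [SeminormedAddCommGroup E] {v : E → ℝ → E}
    {Z : ℝ → E} {I : Set ℝ} {X₁ X₂ C : ℝ} (hX₁ : 0 ≤ X₁)
    (hLipx : ∀ t ∈ I, ∀ x y : E, ‖v x t - v y t‖ ≤ X₁ * ‖x - y‖)
    (hLipt : ∀ x : E, ∀ s ∈ I, ∀ t ∈ I, ‖v x s - v x t‖ ≤ X₂ * |s - t|)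
    (hZ : ∀ p ∈ I, ∀ q ∈ I, ‖Z p - Z q‖ ≤ C * |p - q|) {s t : ℝ} (hs : s ∈ I) (ht : t ∈ I) :
    ‖v (Z s) s - v (Z t) t‖ ≤ (C * X₁ + X₂) * |s - t| :=
  calc ‖v (Z s) s - v (Z t) t‖ ≤ ‖v (Z s) s - v (Z t) s‖ + ‖v (Z t) s - v (Z t) t‖ :=
        norm_sub_le_norm_sub_add_norm_sub _ _ _
    _ ≤ X₁ * (C * |s - t|) + X₂ * |s - t| := by
        gcongr
        · exact (hLipx s hs _ _).trans (by gcongr; exact hZ s hs t ht)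
        · exact hLipt _ s hs t ht
    _ = (C * X₁ + X₂) * |s - t| := by ring

/-- One Uni-Inv step `y ↦ y + h • g (y + h • f y)` against the implicit Euler step
`x₀ ↦ x₁ = x₀ + h • g x₁`; `f` and `g` are the velocity fields at the two grid times. -/
theorem norm_sub_uniInv_step_le {E : Type*} [SeminormedAddCommGroup E] [NormedSpace ℝ E]
    {f g : E → E} {L K h : ℝ} (hL : 0 ≤ L) (hh : 0 ≤ h)
    (hf : ∀ x y, ‖f x - f y‖ ≤ L * ‖x - y‖) (hg : ∀ x y, ‖g x - g y‖ ≤ L * ‖x - y‖)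
    {x₀ x₁ y : E} (heuler : x₁ = x₀ + h • g x₁) (htrunc : ‖g x₁ - f x₀‖ ≤ K * h) :
    ‖x₁ - (y + h • g (y + h • f y))‖
      ≤ (1 + (h * L + h ^ 2 * L ^ 2)) * ‖x₀ - y‖ + L * K * h ^ 3 := by
  set w := y + h • f y
  have hpredictor : ‖x₁ - w‖ ≤ (1 + h * L) * ‖x₀ - y‖ + K * h ^ 2 :=
    calc ‖x₁ - w‖ = ‖(x₀ - y) + h • (g x₁ - f x₀) + h • (f x₀ - f y)‖ := by
          congr 1
          linear_combination (norm := module) heuler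
      _ ≤ ‖x₀ - y‖ + h * (K * h) + h * (L * ‖x₀ - y‖) := by
          refine norm_add₃_le.trans ?_
          rw [norm_smul_of_nonneg hh, norm_smul_of_nonneg hh]
          gcongr
          exact hf _ _
      _ = (1 + h * L) * ‖x₀ - y‖ + K * h ^ 2 := by ring
  calc ‖x₁ - (y + h • g w)‖ = ‖(x₀ - y) + h • (g x₁ - g w)‖ := by
        congr 1
        linear_combination (norm := module) heuler
    _ ≤ ‖x₀ - y‖ + h * (L * ‖x₁ - w‖) := by
        refine (norm_add_le _ _).trans ?_
        rw [norm_smul_of_nonneg hh]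
        gcongr
        exact hg _ _
    _ ≤ ‖x₀ - y‖ + h * (L * ((1 + h * L) * ‖x₀ - y‖ + K * h ^ 2)) := by gcongr
    _ = (1 + (h * L + h ^ 2 * L ^ 2)) * ‖x₀ - y‖ + L * K * h ^ 3 := by ring

/-- **Global error of Uni-Inv.** On the uniform grid `t j = j·h`, `h = 1/N`, if `Z`
satisfies the Euler relation at every step and the Uni-Inv iterates use the
second-order corrector velocity at each step, then
`‖Z 1 − Ẑ N‖ ≤ (C·X₁ + X₂)·(exp (X₁ + X₁²) − 1)·h²`, i.e. the global error is
`O(h²)`. -/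
theorem uniInv_global_error
    {E : Type*} [NormedAddCommGroup E] [NormedSpace ℝ E]
    (v : E → ℝ → E) (X₁ X₂ C : ℝ)
    (hX₁ : 0 < X₁) (hX₂ : 0 ≤ X₂) (hC : 0 ≤ C)
    (hLipx : ∀ t ∈ Set.Icc (0:ℝ) 1, ∀ x y : E, ‖v x t - v y t‖ ≤ X₁ * ‖x - y‖)
    (hLipt : ∀ x : E, ∀ s ∈ Set.Icc (0:ℝ) 1, ∀ t ∈ Set.Icc (0:ℝ) 1,
      ‖v x s - v x t‖ ≤ X₂ * |s - t|)
    (Z : ℝ → E)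
    (hZ : ∀ p ∈ Set.Icc (0:ℝ) 1, ∀ q ∈ Set.Icc (0:ℝ) 1, ‖Z p - Z q‖ ≤ C * |p - q|)
    (N : ℕ) (hN : 1 ≤ N)
    (h : ℝ) (hh : h = 1 / N)
    (t : ℕ → ℝ) (ht : ∀ j, t j = j * h)
    (hEuler : ∀ j, 1 ≤ j → j ≤ N →
      Z (t j) = Z (t (j - 1)) + h • v (Z (t j)) (t j))
    (Zhat : ℕ → E)
    (hZhat0 : Zhat 0 = Z 0)
    (hZhatStep : ∀ j, 1 ≤ j → j ≤ N →
      Zhat j = Zhat (j - 1)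
        + h • v (Zhat (j - 1) + h • v (Zhat (j - 1)) (t (j - 1))) (t j)) :
    ‖Z 1 - Zhat N‖ ≤ (C * X₁ + X₂) * (Real.exp (X₁ + X₁ ^ 2) - 1) * h ^ 2 := by
  have hN0 : (0 : ℝ) < N := by exact_mod_cast hN
  have hh0 : 0 < h := by rw [hh]; positivity
  have hNh : (N : ℝ) * h = 1 := by rw [hh]; field_simp
  have hgrid : ∀ j ≤ N, t j ∈ Icc (0 : ℝ) 1 := fun j hj => by
    rw [ht, ← hNh]
    exact ⟨by positivity, by gcongr⟩
  have hspacing : ∀ j, |t (j + 1) - t j| = h := fun j => by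
    rw [ht, ht, Nat.cast_succ, add_mul, one_mul, add_sub_cancel_left, abs_of_pos hh0]
  set K := C * X₁ + X₂
  set a := h * X₁ + h ^ 2 * X₁ ^ 2
  have hstep : ∀ j < N,
      ‖Z (t (j + 1)) - Zhat (j + 1)‖ ≤ (1 + a) * ‖Z (t j) - Zhat j‖ + K * h ^ 2 * a := by
    intro j hj
    rw [hZhatStep (j + 1) (by omega) hj, Nat.add_sub_cancel]
    have htrunc := norm_velocity_sub_le hX₁.le hLipx hLipt hZ (hgrid (j + 1) hj) (hgrid j hj.le)
    rw [hspacing] at htrunc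
    refine (norm_sub_uniInv_step_le hX₁.le hh0.le (hLipx _ (hgrid j hj.le))
      (hLipx _ (hgrid (j + 1) hj)) (by simpa using hEuler (j + 1) (by omega) hj) htrunc).trans ?_
    have : X₁ * K * h ^ 3 ≤ K * h ^ 2 * a := by
      have : 0 ≤ K * h ^ 4 * X₁ ^ 2 := by positivity
      linarith
    linarith
  have hgronwall := discrete_gronwall_one_add_pow (u := fun j => ‖Z (t j) - Zhat j‖)
    (by positivity) (by simp [ht, hZhat0]) hstep
  have hexp : (1 + a) ^ N ≤ exp (X₁ + X₁ ^ 2) :=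
    (one_add_pow_le_exp_mul (by positivity) N).trans <| exp_le_exp.mpr <| by
      have hh1 : h ≤ 1 := by rw [hh]; exact div_le_one_of_le₀ (by exact_mod_cast hN) hN0.le
      have : h * X₁ ^ 2 ≤ X₁ ^ 2 := mul_le_of_le_one_left (sq_nonneg _) hh1
      nlinarith
  calc ‖Z 1 - Zhat N‖ = ‖Z (t N) - Zhat N‖ := by rw [ht, hNh]
    _ ≤ K * h ^ 2 * ((1 + a) ^ N - 1) := hgronwall
    _ ≤ K * h ^ 2 * (exp (X₁ + X₁ ^ 2) - 1) := by gcongr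
    _ = K * (exp (X₁ + X₁ ^ 2) - 1) * h ^ 2 := by ring
end
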